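/- Let $(\mathcal{S},\mathcal{L},\mathcal{P})$ be a labelled Markov chain, and let $\precsim$ denote the largest probabilistic simulation (the union of all probabilistic simulations) and $\backsim$ the largest probabilistic bisimulation. Then $\backsim \;=\; \precsim \cap \precsim^{op}$, i.e., two states are bisimilar if and only if each simulates the other. -/

import Mathlib

open scoped ENNReal

/-- Probability of jumping from `s` with label `l` into the set `X`. -/
noncomputable def pSet {S L : Type*} (P : S → L → S → ℝ≥0∞) (s : S) (l : L) (X : Set S) : ℝ≥0∞ :=
  ∑' x : X, P s l x

/-- Relational image `R(X) = {y | ∃ x ∈ X, x R y}`. -/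
def rimg {S : Type*} (R : S → S → Prop) (X : Set S) : Set S := {y | ∃ x ∈ X, R x y}

/-- `E` is an equivalence class of `R`. -/
def EqClass {S : Type*} (R : S → S → Prop) (E : Set S) : Prop := ∃ z, E = {y | R z y}

/-- A labelled Markov chain structure on a transition probability matrix. -/
structure IsLMC {S L : Type*} (P : S → L → S → ℝ≥0∞) : Prop where
  le_one : ∀ s l t, P s l t ≤ 1
  sum_le_one : ∀ s l, (∑' t, P s l t) ≤ 1

/-- A probabilistic simulation: a preorder `R` such that `s R t` implies
`P(s,l,X) ≤ P(t,l,R(X))`. -/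
def IsProbSim {S L : Type*} (P : S → L → S → ℝ≥0∞) (R : S → S → Prop) : Prop :=
  Reflexive R ∧ Transitive R ∧
    ∀ s t, R s t → ∀ (l : L) (X : Set S), pSet P s l X ≤ pSet P t l (rimg R X)

/-- A probabilistic bisimulation: an equivalence relation `R` such that `s R t` implies
`P(s,l,E) = P(t,l,E)` for every `R`-equivalence class `E`. -/
def IsProbBisim {S L : Type*} (P : S → L → S → ℝ≥0∞) (R : S → S → Prop) : Prop :=
  Equivalence R ∧
    ∀ s t, R s t → ∀ (l : L) (E : Set S), EqClass R E → pSet P s l E = pSet P t l E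

/-- Similarity: the union of all probabilistic simulations. -/
def ProbSimilar {S L : Type*} (P : S → L → S → ℝ≥0∞) (s t : S) : Prop :=
  ∃ R, IsProbSim P R ∧ R s t

/-- Bisimilarity: the union of all probabilistic bisimulations. -/
def Bisimilar {S L : Type*} (P : S → L → S → ℝ≥0∞) (s t : S) : Prop :=
  ∃ R, IsProbBisim P R ∧ R s t

/-!
Every bisimulation `R` is a simulation: `R(X)` is a union of `R`-classes, so `s R t` gives
`P(s,l,X) ≤ P(s,l,R(X)) = P(t,l,R(X))`. Conversely, similarity `≾` is itself a simulation (closed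
under composition), and a state that simulates another reaches every `≾`-upward-closed set with at
least the same probability. For `s ≾ t ≾ s` this gives equal probabilities on the upward closure
`U` of a state `z` and on `D = {y ∈ U | ¬ y ≾ z}`, both upward closed; the class of `z` under
`≾ ∩ ≾ᵒᵖ` is `U \ D`, and since probabilities are finite they cancel.
-/

section Relations

variable {S : Type*} (R : S → S → Prop)

def IsRClosed (A : Set S) : Prop := ∀ ⦃a b⦄, a ∈ A → R a b → b ∈ A

variable {R}

lemma subset_rimg (hR : ∀ x, R x x) (X : Set S) : X ⊆ rimg R X :=
  fun x hx => ⟨x, hx, hR x⟩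

lemma rimg_mono {R' : S → S → Prop} (h : ∀ a b, R a b → R' a b) (X : Set S) :
    rimg R X ⊆ rimg R' X := by
  rintro y ⟨x, hx, hxy⟩
  exact ⟨x, hx, h _ _ hxy⟩

lemma rimg_eq_of_isRClosed (hR : ∀ x, R x x) {A : Set S} (hA : IsRClosed R A) :
    rimg R A = A :=
  (subset_rimg hR A).antisymm' fun _ ⟨_, hx, hxy⟩ => hA hx hxy

lemma isRClosed_rimg (hR : ∀ ⦃x y z⦄, R x y → R y z → R x z) (X : Set S) :
    IsRClosed R (rimg R X) :=
  fun _ _ ⟨x, hx, hxa⟩ hab => ⟨x, hx, hR hxa hab⟩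

end Relations

section pSet

variable {S L : Type*} (P : S → L → S → ℝ≥0∞) (s : S) (l : L)

lemma pSet_eq_tsum_indicator (X : Set S) : pSet P s l X = ∑' x, X.indicator (P s l) x :=
  tsum_subtype X (P s l)

lemma pSet_empty : pSet P s l ∅ = 0 := by
  simp [pSet]

lemma pSet_mono {X Y : Set S} (h : X ⊆ Y) : pSet P s l X ≤ pSet P s l Y := by
  rw [pSet_eq_tsum_indicator, pSet_eq_tsum_indicator]
  exact ENNReal.tsum_le_tsum (Set.indicator_le_indicator_of_subset h fun _ => zero_le)

lemma pSet_union {A B : Set S} (h : Disjoint A B) :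
    pSet P s l (A ∪ B) = pSet P s l A + pSet P s l B := by
  simp only [pSet_eq_tsum_indicator, ← ENNReal.tsum_add, Set.indicator_union_of_disjoint h]

lemma pSet_eq_tsum_fiberwise {γ : Type*} (g : S → γ) (A : Set S) :
    pSet P s l A = ∑' c, pSet P s l (A ∩ g ⁻¹' {c}) := by
  rw [pSet_eq_tsum_indicator, ← ENNReal.tsum_fiberwise _ g]
  refine tsum_congr fun c => ?_
  rw [tsum_subtype, Set.indicator_indicator, Set.inter_comm, pSet_eq_tsum_indicator]

lemma IsLMC.pSet_le_one {P : S → L → S → ℝ≥0∞} (hP : IsLMC P) (X : Set S) :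
    pSet P s l X ≤ 1 := by
  refine le_trans ?_ (hP.sum_le_one s l)
  rw [pSet_eq_tsum_indicator]
  exact ENNReal.tsum_le_tsum (Set.indicator_le_self X (P s l))

end pSet

section Simulation

variable {S L : Type*} {P : S → L → S → ℝ≥0∞} {R : S → S → Prop}

lemma isProbSim_eq : IsProbSim P (Eq : S → S → Prop) := by
  refine ⟨fun _ => rfl, fun _ _ _ => Eq.trans, fun s t hst l X => ?_⟩
  rw [hst, rimg_eq_of_isRClosed (fun _ => rfl) fun _ _ ha hab => hab ▸ ha]

lemma isProbSim_transGen (hR : ∀ x, R x x)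
    (hsim : ∀ s t, R s t → ∀ (l : L) (X : Set S), pSet P s l X ≤ pSet P t l (rimg R X)) :
    IsProbSim P (Relation.TransGen R) := by
  refine ⟨fun x => .single (hR x), fun _ _ _ => .trans, fun s t hst l X => ?_⟩
  induction hst with
  | single h => exact (hsim _ _ h l X).trans (pSet_mono _ _ _ (rimg_mono (fun _ _ => .single) X))
  | tail _ h ih =>
    refine ih.trans ((hsim _ _ h l _).trans (pSet_mono _ _ _ ?_))
    rintro y ⟨x, ⟨x₀, hx₀, hx₀x⟩, hxy⟩
    exact ⟨x₀, hx₀, hx₀x.tail hxy⟩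

variable (P) in
lemma isProbSim_probSimilar : IsProbSim P (ProbSimilar P) := by
  have hrefl : ∀ x, ProbSimilar P x x := fun x => ⟨Eq, isProbSim_eq, rfl⟩
  have hsim : ∀ s t, ProbSimilar P s t → ∀ (l : L) (X : Set S),
      pSet P s l X ≤ pSet P t l (rimg (ProbSimilar P) X) := by
    rintro s t ⟨R, hR, hst⟩ l X
    exact (hR.2.2 s t hst l X).trans (pSet_mono _ _ _ (rimg_mono (fun _ _ h => ⟨R, hR, h⟩) X))
  exact ⟨hrefl,
    fun _ _ _ hab hbc => ⟨_, isProbSim_transGen hrefl hsim, .tail (.single hab) hbc⟩, hsim⟩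

lemma IsProbSim.pSet_le_of_isRClosed (hR : IsProbSim P R) {s t : S} (hst : R s t) (l : L)
    {A : Set S} (hA : IsRClosed R A) : pSet P s l A ≤ pSet P t l A :=
  (hR.2.2 s t hst l A).trans_eq (by rw [rimg_eq_of_isRClosed hR.1 hA])

lemma IsProbSim.isProbBisim_inf_flip (hP : IsLMC P) (hR : IsProbSim P R) :
    IsProbBisim P (fun x y => R x y ∧ R y x) := by
  obtain ⟨hrefl, htrans, -⟩ := id hR
  refine ⟨⟨fun x => ⟨hrefl x, hrefl x⟩, fun h => h.symm,
    fun h₁ h₂ => ⟨htrans h₁.1 h₂.1, htrans h₂.2 h₁.2⟩⟩, ?_⟩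
  rintro a b ⟨hab, hba⟩ l E ⟨z, rfl⟩
  set U := {y | R z y}
  set D := {y | R z y ∧ ¬ R y z}
  have hU : IsRClosed R U := fun _ _ hx hxy => htrans hx hxy
  have hD : IsRClosed R D := fun _ _ ⟨hzx, hxz⟩ hxy =>
    ⟨htrans hzx hxy, fun hyz => hxz (htrans hxy hyz)⟩
  have hUD : ∀ u, pSet P u l U = pSet P u l {y | R z y ∧ R y z} + pSet P u l D := fun u => by
    rw [← pSet_union]
    · congr 1
      ext y
      simp only [U, D, Set.mem_ofPred_eq, Set.mem_union]
      tauto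
    · exact Set.disjoint_left.2 fun _ h₁ h₂ => h₂.2 h₁.2
  have hUeq := (hR.pSet_le_of_isRClosed hab l hU).antisymm (hR.pSet_le_of_isRClosed hba l hU)
  have hDeq := (hR.pSet_le_of_isRClosed hab l hD).antisymm (hR.pSet_le_of_isRClosed hba l hD)
  rw [hUD, hUD, hDeq] at hUeq
  exact (ENNReal.add_left_inj (ne_top_of_le_ne_top ENNReal.one_ne_top (hP.pSet_le_one b l D))).1
    hUeq

end Simulation

section Bisimulation

variable {S L : Type*} {P : S → L → S → ℝ≥0∞} {R : S → S → Prop}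

/-- An `R`-closed set is a disjoint union of `R`-classes, summed over the quotient. -/
lemma IsProbBisim.pSet_eq_of_isRClosed (hR : IsProbBisim P R) {s t : S} (hst : R s t) (l : L)
    {A : Set S} (hA : IsRClosed R A) : pSet P s l A = pSet P t l A := by
  let r : Setoid S := ⟨R, hR.1⟩
  rw [pSet_eq_tsum_fiberwise P s l (Quotient.mk r), pSet_eq_tsum_fiberwise P t l (Quotient.mk r)]
  refine tsum_congr fun q => ?_
  have hfiber : Quotient.mk r ⁻¹' {q} = {y | R q.out y} := by
    ext y
    exact Quotient.mk_eq_iff_out.trans ⟨hR.1.symm, hR.1.symm⟩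
  rw [hfiber]
  by_cases hq : q.out ∈ A
  · have hclass : A ∩ {y | R q.out y} = {y | R q.out y} := Set.inter_eq_right.2 fun _ => hA hq
    rw [hclass]
    exact hR.2 s t hst l _ ⟨q.out, rfl⟩
  · have hempty : A ∩ {y | R q.out y} = ∅ :=
      Set.disjoint_iff_inter_eq_empty.1 (Set.disjoint_left.2 fun _ hy hqy =>
        hq (hA hy (hR.1.symm hqy)))
    rw [hempty, pSet_empty, pSet_empty]

lemma IsProbBisim.isProbSim (hR : IsProbBisim P R) : IsProbSim P R := by
  refine ⟨hR.1.refl, fun _ _ _ => hR.1.trans, fun s t hst l X => ?_⟩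
  calc pSet P s l X ≤ pSet P s l (rimg R X) := pSet_mono _ _ _ (subset_rimg hR.1.refl X)
    _ = pSet P t l (rimg R X) :=
      hR.pSet_eq_of_isRClosed hst l (isRClosed_rimg (R := R) (fun _ _ _ => hR.1.trans) X)

end Bisimulation

theorem stmt3_general {S L : Type*} (P : S → L → S → ℝ≥0∞) (hP : IsLMC P)
    (s t : S) :
    Bisimilar P s t ↔ ProbSimilar P s t ∧ ProbSimilar P t s := by
  constructor
  · rintro ⟨R, hR, hst⟩
    exact ⟨⟨R, hR.isProbSim, hst⟩, ⟨R, hR.isProbSim, hR.1.symm hst⟩⟩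
  · exact fun hst => ⟨_, (isProbSim_probSimilar P).isProbBisim_inf_flip hP, hst⟩

/-- on a labelled Markov chain, bisimilarity (the largest probabilistic
bisimulation) coincides with mutual similarity: `∼ = ≾ ∩ ≾ᵒᵖ`. -/
theorem stmt3 {S L : Type*} [Countable S] (P : S → L → S → ℝ≥0∞) (hP : IsLMC P)
    (s t : S) :
    Bisimilar P s t ↔ ProbSimilar P s t ∧ ProbSimilar P t s :=
  stmt3_general P hP s t
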